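/- Given an (S_n)_{n≥1}-admissible tree T of finite height, there exists an S_1-admissible tree T′ with the same root such that T and T′ have the same set of leaves, and o_T(E) = o_{T′}(E) for every leaf E. -/

import Mathlib

/-- The Schreier families: `Schreier 0` consists of the singletons and `∅`;
`Schreier (n+1)` consists of all unions `G_0 ∪ … ∪ G_{k-1}` of nonempty members of
`Schreier n` with `G_0 < G_1 < … < G_{k-1}` and `k ≤ min G_0`. -/
def Schreier : ℕ → Set (Finset ℕ)
  | 0 => {F | F.card ≤ 1}
  | n + 1 => {F | ∃ (k : ℕ) (G : ℕ → Finset ℕ),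
      F = (Finset.range k).biUnion G ∧
      (∀ i < k, G i ∈ Schreier n) ∧
      (∀ i < k, (G i).Nonempty) ∧
      (∀ i j, i < j → j < k → ∀ a ∈ G i, ∀ b ∈ G j, a < b) ∧
      (∀ a ∈ G 0, k ≤ a)}

/-- The minimum of a finite set of naturals (`0` for the empty set). -/
def minN (E : Finset ℕ) : ℕ := WithTop.untopD 0 E.min

/-- Norming trees: a leaf carries a finite set; an internal node carries a finite
set, the Schreier index `n` used for its immediate successors, and the list of
subtrees rooted at those successors. -/
inductive NTree : Type
  | leaf : Finset ℕ → NTree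
  | node : Finset ℕ → ℕ → List NTree → NTree

/-- The set at the root of a norming tree. -/
def NTree.root : NTree → Finset ℕ
  | .leaf E => E
  | .node E _ _ => E

/-- A finite list of sets is `S_n`-admissible: the sets are successive
(`E < F` for earlier `E`, later `F`) and the set of their minima lies in `S_n`. -/
def AdmissibleSets (n : ℕ) (l : List (Finset ℕ)) : Prop :=
  l.Pairwise (fun E F => ∀ a ∈ E, ∀ b ∈ F, a < b) ∧
    (l.map minN).toFinset ∈ Schreier n

/-- A finite list of sets is `S_n`-allowable: the sets are pairwise disjoint and
the set of their minima lies in `S_n`. -/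
def AllowableSets (n : ℕ) (l : List (Finset ℕ)) : Prop :=
  l.Pairwise (fun E F => Disjoint E F) ∧
    (l.map minN).toFinset ∈ Schreier n

/-- `(S_n)_{n≥1}`-admissible trees: every node set is nonempty, children are
contained in their parent, and the immediate successors of each internal node
form an `S_n`-admissible collection, `n ≥ 1` being the index recorded at the node. -/
inductive ValidAdm : NTree → Prop
  | leaf (E : Finset ℕ) (hE : E.Nonempty) : ValidAdm (.leaf E)
  | node (E : Finset ℕ) (n : ℕ) (cs : List NTree) (hE : E.Nonempty) (hn : 1 ≤ n)
      (hne : cs ≠ [])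
      (hsub : ∀ c ∈ cs, NTree.root c ⊆ E)
      (hadm : AdmissibleSets n (cs.map NTree.root))
      (hval : ∀ c ∈ cs, ValidAdm c) : ValidAdm (.node E n cs)

/-- `(S_n)_{n≥1}`-allowable trees (for the modified mixed Tsirelson norm). -/
inductive ValidAllow : NTree → Prop
  | leaf (E : Finset ℕ) (hE : E.Nonempty) : ValidAllow (.leaf E)
  | node (E : Finset ℕ) (n : ℕ) (cs : List NTree) (hE : E.Nonempty) (hn : 1 ≤ n)
      (hne : cs ≠ [])
      (hsub : ∀ c ∈ cs, NTree.root c ⊆ E)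
      (hadm : AllowableSets n (cs.map NTree.root))
      (hval : ∀ c ∈ cs, ValidAllow c) : ValidAllow (.node E n cs)

/-- `S_N`-admissible trees: every branching uses the fixed Schreier index `N`. -/
inductive ValidAdmN (N : ℕ) : NTree → Prop
  | leaf (E : Finset ℕ) (hE : E.Nonempty) : ValidAdmN N (.leaf E)
  | node (E : Finset ℕ) (cs : List NTree) (hE : E.Nonempty)
      (hne : cs ≠ [])
      (hsub : ∀ c ∈ cs, NTree.root c ⊆ E)
      (hadm : AdmissibleSets N (cs.map NTree.root))
      (hval : ∀ c ∈ cs, ValidAdmN N c) : ValidAdmN N (.node E N cs)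

/-- `IsNodeAt T d F`: `F` is a node of the tree `T` whose order `o(F)`—the sum of
the Schreier indices along the branch from the root to `F`—equals `d`. -/
inductive IsNodeAt : NTree → ℕ → Finset ℕ → Prop
  | root (T : NTree) : IsNodeAt T 0 T.root
  | child (E : Finset ℕ) (n : ℕ) (cs : List NTree) (c : NTree) (d : ℕ) (F : Finset ℕ)
      (hc : c ∈ cs) (h : IsNodeAt c d F) : IsNodeAt (.node E n cs) (n + d) F

/-- `IsLeafAt T d F`: `F` is a leaf of the tree `T` of order `o(F) = d`. -/
inductive IsLeafAt : NTree → ℕ → Finset ℕ → Prop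
  | leaf (E : Finset ℕ) : IsLeafAt (.leaf E) 0 E
  | child (E : Finset ℕ) (n : ℕ) (cs : List NTree) (c : NTree) (d : ℕ) (F : Finset ℕ)
      (hc : c ∈ cs) (h : IsLeafAt c d F) : IsLeafAt (.node E n cs) (n + d) F

/-!
An `S_{n+1}`-admissible family `E_1 < ⋯ < E_m` has its set of minima of the form
`G_0 ∪ ⋯ ∪ G_{k-1}` with `G_0 < ⋯ < G_{k-1}` in `S_n` and `k ≤ min G_0`. Cutting the family into
the consecutive blocks whose minima are the `G_i`, each block is `S_n`-admissible, and the unions of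
the blocks are `k` successive sets with minima `min G_i`, hence `S_1`-admissible. So an
`S_{n+1}`-branching is an `S_1`-branching followed by `S_n`-branchings, and by induction on `n`
every branching of index `n` becomes `n` levels of `S_1`-branchings. The leaves and their orders
are unchanged, and doing this at every node of `T` gives `T'`.
-/

lemma minN_eq_min' {E : Finset ℕ} (hE : E.Nonempty) : minN E = E.min' hE := by
  rw [minN, ← Finset.coe_min' hE]; rfl

lemma minN_mem {E : Finset ℕ} (hE : E.Nonempty) : minN E ∈ E := by
  rw [minN_eq_min' hE]; exact E.min'_mem hE

lemma minN_le {E : Finset ℕ} {a : ℕ} (ha : a ∈ E) : minN E ≤ a := by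
  rw [minN_eq_min' ⟨a, ha⟩]; exact Finset.min'_le _ _ ha

lemma mem_schreier_one_of_card_le_minN {F : Finset ℕ} (h : F.card ≤ minN F) :
    F ∈ Schreier 1 := by
  set s := F.sort
  have hlen : s.length = F.card := F.length_sort _
  have hget : ∀ i (hi : i < F.card), s.getD i 0 = s[i] := fun i hi =>
    List.getD_eq_getElem _ _ (by omega)
  refine ⟨F.card, fun i => {s.getD i 0}, ?_, fun i _ => ?_, fun i _ => by simp, ?_, ?_⟩
  · ext a
    simp only [Finset.mem_biUnion, Finset.mem_range, Finset.mem_singleton]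
    constructor
    · intro ha
      obtain ⟨i, hi, rfl⟩ := List.getElem_of_mem (show a ∈ s from (F.mem_sort _).2 ha)
      exact ⟨i, by omega, (hget i (by omega)).symm⟩
    · rintro ⟨i, hi, rfl⟩
      exact hget i hi ▸ (F.mem_sort _).1 (List.getElem_mem _)
  · simp [Schreier]
  · intro i j hij hj a ha b hb
    rw [Finset.mem_singleton] at ha hb
    rw [ha, hb, hget i (by omega), hget j hj]
    exact F.sortedLT_sort.getElem_lt_getElem_of_lt hij
  · intro a ha
    rcases F.eq_empty_or_nonempty with rfl | hF
    · simp
    have hpos : 0 < s.length := hlen ▸ Finset.card_pos.2 hF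
    rw [Finset.mem_singleton.1 ha, hget 0 (by omega), Finset.sorted_zero_eq_min' (h := hpos),
      ← minN_eq_min']
    exact h

section Blocks

variable {α : Type*} (f : α → ℕ)

lemma notMem_of_mem_dropWhile {l : List α} (hl : (l.map f).Pairwise (· < ·))
    {A B : Finset ℕ} (hAB : (l.map f).toFinset = A ∪ B) (hlt : ∀ a ∈ A, ∀ b ∈ B, a < b)
    {x : α} (hx : x ∈ l.dropWhile (f · ∈ A)) : f x ∉ A := by
  obtain ⟨y, t, hyt⟩ := List.exists_cons_of_ne_nil (List.ne_nil_of_mem hx)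
  have hy : f y ∉ A := by simpa [hyt] using List.head?_dropWhile_not (f · ∈ A) l
  have hyB : f y ∈ B := by
    have : f y ∈ (l.map f).toFinset := by
      simp only [List.mem_toFinset, List.mem_map]
      exact ⟨y, (List.dropWhile_sublist _).subset (hyt ▸ List.mem_cons_self), rfl⟩
    simpa [hAB, hy] using this
  rw [hyt] at hx
  rcases List.mem_cons.1 hx with rfl | hxt
  · exact hy
  · have hsorted : ((y :: t).map f).Pairwise (· < ·) :=
      hyt ▸ hl.sublist ((List.dropWhile_sublist _).map f)
    have hyx : f y < f x := (List.pairwise_cons.1 hsorted).1 _ (List.mem_map_of_mem hxt)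
    exact fun hxA => (hlt _ hxA _ hyB).not_gt hyx

lemma toFinset_map_takeWhile_dropWhile {l : List α} (hl : (l.map f).Pairwise (· < ·))
    {A B : Finset ℕ} (hAB : (l.map f).toFinset = A ∪ B) (hlt : ∀ a ∈ A, ∀ b ∈ B, a < b) :
    ((l.takeWhile (f · ∈ A)).map f).toFinset = A ∧
      ((l.dropWhile (f · ∈ A)).map f).toFinset = B := by
  have hdisj : ∀ a ∈ A, a ∉ B := fun a ha hb => (hlt a ha a hb).false
  have hmem : ∀ a, a ∈ A ∪ B ↔ ∃ x, (x ∈ l.takeWhile (f · ∈ A) ∨ x ∈ l.dropWhile (f · ∈ A)) ∧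
      f x = a := by
    intro a
    rw [← hAB, List.mem_toFinset, List.mem_map]
    simp only [← List.mem_append, List.takeWhile_append_dropWhile]
  have htake : ∀ x ∈ l.takeWhile (f · ∈ A), f x ∈ A := fun x hx => by
    simpa using List.mem_takeWhile_imp hx
  have hdrop := fun x (hx : x ∈ l.dropWhile (f · ∈ A)) =>
    notMem_of_mem_dropWhile f hl hAB hlt hx
  constructor <;> ext a <;> simp only [List.mem_toFinset, List.mem_map]
  · refine ⟨fun ⟨x, hx, hxa⟩ => hxa ▸ htake x hx, fun ha => ?_⟩
    obtain ⟨x, hx | hx, rfl⟩ := (hmem a).1 (Finset.mem_union_left _ ha)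
    · exact ⟨x, hx, rfl⟩
    · exact absurd ha (hdrop x hx)
  · constructor
    · rintro ⟨x, hx, rfl⟩
      have := (hmem (f x)).2 ⟨x, Or.inr hx, rfl⟩
      simpa [hdrop x hx] using this
    · intro ha
      obtain ⟨x, hx | hx, rfl⟩ := (hmem a).1 (Finset.mem_union_right _ ha)
      · exact absurd ha (hdisj _ (htake x hx))
      · exact ⟨x, hx, rfl⟩

lemma exists_flatten_eq_of_toFinset_map_eq_biUnion {k : ℕ} {G : ℕ → Finset ℕ} {l : List α}
    (hl : (l.map f).Pairwise (· < ·))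
    (hG : (l.map f).toFinset = (Finset.range k).biUnion G)
    (hGlt : ∀ i j, i < j → j < k → ∀ a ∈ G i, ∀ b ∈ G j, a < b) :
    ∃ bs : List (List α), bs.flatten = l ∧
      bs.map (fun b => (b.map f).toFinset) = (List.range k).map G := by
  induction k generalizing G l with
  | zero =>
    refine ⟨[], ?_, rfl⟩
    simpa using hG
  | succ k ih =>
    have hsplit : (l.map f).toFinset = G 0 ∪ (Finset.range k).biUnion (fun i => G (i + 1)) := by
      rw [hG, Finset.range_add_one', Finset.biUnion_insert, Finset.map_eq_image,
        Finset.image_biUnion]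
      rfl
    obtain ⟨htake, hdrop⟩ := toFinset_map_takeWhile_dropWhile f hl hsplit (by
      simp only [Finset.mem_biUnion, Finset.mem_range]
      rintro a ha b ⟨i, hi, hb⟩
      exact hGlt 0 (i + 1) (by omega) (by omega) a ha b hb)
    obtain ⟨bs, hbs, hbsG⟩ := ih (hl.sublist ((List.dropWhile_sublist _).map f)) hdrop
      (fun i j hij hj => hGlt (i + 1) (j + 1) (by omega) (by omega))
    refine ⟨l.takeWhile (f · ∈ G 0) :: bs, by simp [hbs], ?_⟩
    rw [List.range_succ_eq_map, List.map_cons, List.map_cons, htake, hbsG, List.map_map]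
    rfl

end Blocks

lemma pairwise_minN_lt {l : List (Finset ℕ)}
    (hsucc : l.Pairwise (fun E F => ∀ a ∈ E, ∀ b ∈ F, a < b)) (hne : ∀ E ∈ l, E.Nonempty) :
    (l.map minN).Pairwise (· < ·) :=
  List.pairwise_map.2 <| hsucc.imp_of_mem fun hE hF h =>
    h _ (minN_mem (hne _ hE)) _ (minN_mem (hne _ hF))

lemma mem_toFinset_sup_id {α : Type*} [DecidableEq α] {L : List (Finset α)} {a : α} :
    a ∈ L.toFinset.sup id ↔ ∃ E ∈ L, a ∈ E := by
  simp [Finset.mem_sup]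

lemma minN_sup_id {L : List (Finset ℕ)} (hL : L ≠ []) (hne : ∀ E ∈ L, E.Nonempty) :
    minN (L.toFinset.sup id) = minN (L.map minN).toFinset := by
  obtain ⟨E₀, hE₀⟩ := List.exists_mem_of_ne_nil L hL
  obtain ⟨a₀, ha₀⟩ := hne E₀ hE₀
  refine le_antisymm ?_ ?_
  · obtain ⟨E, hE, hEmin⟩ := List.mem_map.1 (List.mem_toFinset.1 (minN_mem
      ⟨minN E₀, List.mem_toFinset.2 (List.mem_map_of_mem hE₀)⟩))
    exact hEmin ▸ minN_le (mem_toFinset_sup_id.2 ⟨E, hE, minN_mem (hne E hE)⟩)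
  · obtain ⟨E, hE, hEmin⟩ :=
      mem_toFinset_sup_id.1 (minN_mem ⟨a₀, mem_toFinset_sup_id.2 ⟨E₀, hE₀, ha₀⟩⟩)
    exact (minN_le (List.mem_toFinset.2 (List.mem_map_of_mem hE))).trans (minN_le hEmin)

lemma toFinset_map_minN_mem_schreier_one {k : ℕ} {G : ℕ → Finset ℕ}
    (hGne : ∀ i < k, (G i).Nonempty) (hGlt : ∀ i j, i < j → j < k → ∀ a ∈ G i, ∀ b ∈ G j, a < b)
    (hGmin : ∀ a ∈ G 0, k ≤ a) :
    ((List.range k).map fun i => minN (G i)).toFinset ∈ Schreier 1 := by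
  set S := ((List.range k).map fun i => minN (G i)).toFinset
  have hk_le : ∀ s ∈ S, k ≤ s := by
    simp only [S, List.mem_toFinset, List.mem_map, List.mem_range]
    rintro _ ⟨i, hi, rfl⟩
    obtain ⟨a, ha⟩ := hGne 0 (by omega)
    rcases Nat.eq_zero_or_pos i with rfl | hi0
    · exact hGmin _ (minN_mem ⟨a, ha⟩)
    · exact (hGmin a ha).trans (hGlt 0 i hi0 hi a ha _ (minN_mem (hGne i hi))).le
  refine mem_schreier_one_of_card_le_minN ?_
  rcases S.eq_empty_or_nonempty with hS | hS
  · simp [hS]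
  calc S.card ≤ k := (List.toFinset_card_le _).trans (by simp)
    _ ≤ minN S := hk_le _ (minN_mem hS)

lemma admissibleSets_one_map_sup {bs : List (List (Finset ℕ))} {k : ℕ} {G : ℕ → Finset ℕ}
    (hsucc : bs.flatten.Pairwise (fun E F => ∀ a ∈ E, ∀ b ∈ F, a < b))
    (hne : ∀ E ∈ bs.flatten, E.Nonempty)
    (hbsG : bs.map (fun b => (b.map minN).toFinset) = (List.range k).map G)
    (hGne : ∀ i < k, (G i).Nonempty) (hGlt : ∀ i j, i < j → j < k → ∀ a ∈ G i, ∀ b ∈ G j, a < b)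
    (hGmin : ∀ a ∈ G 0, k ≤ a) :
    AdmissibleSets 1 (bs.map fun b => b.toFinset.sup id) := by
  refine ⟨List.pairwise_map.2 ((List.pairwise_flatten.1 hsucc).2.imp fun h a ha b hb => ?_), ?_⟩
  · obtain ⟨E, hE, haE⟩ := mem_toFinset_sup_id.1 ha
    obtain ⟨F, hF, hbF⟩ := mem_toFinset_sup_id.1 hb
    exact h E hE F hF a haE b hbF
  · have hminima : (bs.map fun b => b.toFinset.sup id).map minN =
        (List.range k).map fun i => minN (G i) := by
      rw [show (List.range k).map (fun i => minN (G i)) = ((List.range k).map G).map minN by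
        rw [List.map_map]; rfl, ← hbsG, List.map_map, List.map_map]
      refine List.map_congr_left fun b hb => ?_
      have hbne : ∀ E ∈ b, E.Nonempty := fun E hE => hne E (List.mem_flatten.2 ⟨b, hb, hE⟩)
      refine minN_sup_id (fun hnil => ?_) hbne
      obtain ⟨i, hi, hGi⟩ := List.mem_map.1 (hbsG ▸ List.mem_map_of_mem hb)
      obtain ⟨a, ha⟩ := hGne i (List.mem_range.1 hi)
      rw [hGi, hnil] at ha
      simp at ha
    rw [hminima]
    exact toFinset_map_minN_mem_schreier_one hGne hGlt hGmin

lemma exists_blocks_of_admissibleSets_succ {α : Type*} (r : α → Finset ℕ) {n : ℕ}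
    {l : List α} (hne : ∀ x ∈ l, (r x).Nonempty) (hadm : AdmissibleSets (n + 1) (l.map r)) :
    ∃ bs : List (List α), bs.flatten = l ∧ (∀ b ∈ bs, b ≠ [] ∧ AdmissibleSets n (b.map r)) ∧
      AdmissibleSets 1 (bs.map fun b => (b.map r).toFinset.sup id) := by
  obtain ⟨hsucc, k, G, hF, hGS, hGne, hGlt, hGmin⟩ := hadm
  have hne' : ∀ E ∈ l.map r, E.Nonempty := by simpa using hne
  obtain ⟨bs, rfl, hbsG⟩ := exists_flatten_eq_of_toFinset_map_eq_biUnion (minN ∘ r)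
    (by simpa using pairwise_minN_lt hsucc hne') (by rw [← hF, List.map_map]) hGlt
  have hblock : ∀ b ∈ bs, ∃ i < k, ((b.map r).map minN).toFinset = G i := fun b hb => by
    obtain ⟨i, hi, hGi⟩ := List.mem_map.1 (hbsG ▸ List.mem_map_of_mem hb)
    exact ⟨i, List.mem_range.1 hi, by rw [List.map_map, hGi]⟩
  refine ⟨bs, rfl, fun b hb => ?_, ?_⟩
  · obtain ⟨i, hi, hGi⟩ := hblock b hb
    refine ⟨?_, hsucc.sublist ((List.sublist_flatten_of_mem hb).map r), hGi ▸ hGS i hi⟩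
    rintro rfl
    simpa [← hGi] using hGne i hi
  · have := admissibleSets_one_map_sup (bs := bs.map (List.map r))
      (by rwa [← List.map_flatten]) (by rwa [← List.map_flatten])
      (by simpa only [List.map_map, Function.comp_def] using hbsG) hGne hGlt hGmin
    rwa [List.map_map] at this

namespace NTree

def SameLeaves (T T' : NTree) : Prop := ∀ d F, IsLeafAt T d F ↔ IsLeafAt T' d F

lemma SameLeaves.trans {T₁ T₂ T₃ : NTree} (h₁₂ : SameLeaves T₁ T₂) (h₂₃ : SameLeaves T₂ T₃) :
    SameLeaves T₁ T₃ := fun d F => (h₁₂ d F).trans (h₂₃ d F)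

lemma root_nonempty {N : ℕ} {T : NTree} (h : ValidAdmN N T) : T.root.Nonempty := by
  cases h <;> assumption

lemma isLeafAt_node_iff {E : Finset ℕ} {n : ℕ} {cs : List NTree} {d : ℕ} {F : Finset ℕ} :
    IsLeafAt (.node E n cs) d F ↔ ∃ c ∈ cs, ∃ e, d = n + e ∧ IsLeafAt c e F := by
  constructor
  · rintro ⟨⟩
    exact ⟨_, ‹_›, _, rfl, ‹_›⟩
  · rintro ⟨c, hc, e, rfl, h⟩
    exact .child E n cs c e F hc h

lemma sameLeaves_node_map {α : Type*} {E : Finset ℕ} {n : ℕ} {l : List α} {f g : α → NTree}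
    (h : ∀ x ∈ l, SameLeaves (f x) (g x)) :
    SameLeaves (.node E n (l.map f)) (.node E n (l.map g)) := by
  intro d F
  simp only [isLeafAt_node_iff, List.mem_map, exists_exists_and_eq_and]
  exact exists_congr fun x => and_congr_right fun hx => exists_congr fun e => and_congr_right
    fun _ => h x hx e F

lemma sameLeaves_node_flatten (E : Finset ℕ) (n m : ℕ) (bs : List (List NTree))
    (g : List NTree → Finset ℕ) :
    SameLeaves (.node E (n + m) bs.flatten) (.node E m (bs.map fun b => .node (g b) n b)) := by
  intro d F
  simp only [isLeafAt_node_iff, List.mem_map, exists_exists_and_eq_and, List.mem_flatten]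
  constructor
  · rintro ⟨c, ⟨b, hb, hc⟩, e, rfl, hleaf⟩
    exact ⟨b, hb, n + e, by omega, c, hc, e, rfl, hleaf⟩
  · rintro ⟨b, hb, _, rfl, c, hc, e, rfl, hleaf⟩
    exact ⟨c, ⟨b, hb, hc⟩, e, by omega, hleaf⟩

instance : Nonempty NTree := ⟨.leaf ∅⟩

lemma exists_validAdmN_one_sameLeaves_node {n : ℕ} (hn : 1 ≤ n) {E : Finset ℕ}
    {cs : List NTree} (hE : E.Nonempty) (hne : cs ≠ []) (hval : ∀ c ∈ cs, ValidAdmN 1 c)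
    (hsub : ∀ c ∈ cs, c.root ⊆ E) (hadm : AdmissibleSets n (cs.map root)) :
    ∃ T', ValidAdmN 1 T' ∧ T'.root = E ∧ SameLeaves (.node E n cs) T' := by
  induction n, hn using Nat.le_induction generalizing E cs with
  | base => exact ⟨_, .node E cs hE hne hsub hadm hval, rfl, fun _ _ => Iff.rfl⟩
  | succ n hn ih =>
    obtain ⟨bs, rfl, hblocks, hadm₁⟩ :=
      exists_blocks_of_admissibleSets_succ root (fun c hc => root_nonempty (hval c hc)) hadm
    have hbcs : ∀ b ∈ bs, ∀ c ∈ b, c ∈ bs.flatten := fun b hb c hc =>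
      List.mem_flatten.2 ⟨b, hb, hc⟩
    have hsub_sup : ∀ b : List NTree, ∀ c ∈ b, c.root ⊆ (b.map root).toFinset.sup id :=
      fun b c hc => Finset.le_sup (f := id) (List.mem_toFinset.2 (List.mem_map_of_mem hc))
    have hblock : ∀ b ∈ bs, ∃ t, ValidAdmN 1 t ∧ t.root = (b.map root).toFinset.sup id ∧
        SameLeaves (.node ((b.map root).toFinset.sup id) n b) t := by
      intro b hb
      obtain ⟨hb_ne, hb_adm⟩ := hblocks b hb
      obtain ⟨c₀, hc₀⟩ := List.exists_mem_of_ne_nil b hb_ne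
      exact ih ((root_nonempty (hval c₀ (hbcs b hb c₀ hc₀))).mono (hsub_sup b c₀ hc₀)) hb_ne
        (fun c hc => hval c (hbcs b hb c hc)) (hsub_sup b) hb_adm
    choose! t ht using hblock
    refine ⟨.node E 1 (bs.map t), .node E _ hE ?_ ?_ ?_ ?_, rfl, ?_⟩
    · rw [Ne, List.map_eq_nil_iff]
      rintro rfl
      exact hne rfl
    · simp only [List.mem_map, forall_exists_index, and_imp, forall_apply_eq_imp_iff₂]
      intro b hb
      rw [(ht b hb).2.1, Finset.sup_le_iff]
      simp only [List.mem_toFinset, List.mem_map, forall_exists_index, and_imp,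
        forall_apply_eq_imp_iff₂]
      exact fun c hc => hsub c (hbcs b hb c hc)
    · convert hadm₁ using 1
      rw [List.map_map]
      exact List.map_congr_left fun b hb => (ht b hb).2.1
    · simpa using fun b hb => (ht b hb).1
    · exact (sameLeaves_node_flatten E n 1 bs _).trans
        (sameLeaves_node_map fun b hb => (ht b hb).2.2)

lemma exists_validAdmN_one_sameLeaves {T : NTree} (hT : ValidAdm T) :
    ∃ T', ValidAdmN 1 T' ∧ T'.root = T.root ∧ SameLeaves T T' := by
  induction hT with
  | leaf E hE => exact ⟨_, .leaf E hE, rfl, fun _ _ => Iff.rfl⟩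
  | node E n cs hE hn hne hsub hadm _ ih =>
    choose! f hf using ih
    have hroots : (cs.map f).map root = cs.map root := by
      rw [List.map_map]
      exact List.map_congr_left fun c hc => (hf c hc).2.1
    obtain ⟨T', hT', hroot, hleaves⟩ := exists_validAdmN_one_sameLeaves_node hn hE
      (by simpa using hne) (by simpa using fun c hc => (hf c hc).1)
      (by simpa using fun c hc => (hf c hc).2.1 ▸ hsub c hc) (hroots ▸ hadm)
    have hchildren := sameLeaves_node_map (E := E) (n := n) (f := id) fun c hc => (hf c hc).2.2
    rw [List.map_id] at hchildren
    exact ⟨T', hT', hroot, hchildren.trans hleaves⟩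

end NTree

/-- Given an `(S_n)_{n≥1}`-admissible tree `T`, there exists an
`S_1`-admissible tree `T'` with the same root and the same set of leaves, with
`o_T(E) = o_{T'}(E)` for every leaf `E`. -/
theorem stmt16 (T : NTree) (hT : ValidAdm T) :
    ∃ T' : NTree, ValidAdmN 1 T' ∧ T'.root = T.root ∧
      (∀ E : Finset ℕ, (∃ d, IsLeafAt T d E) ↔ (∃ d, IsLeafAt T' d E)) ∧
      (∀ E d, IsLeafAt T d E → IsLeafAt T' d E) := by
  obtain ⟨T', hT', hroot, hleaves⟩ := NTree.exists_validAdmN_one_sameLeaves hT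
  exact ⟨T', hT', hroot, fun E => exists_congr fun d => hleaves d E,
    fun E d => (hleaves d E).1⟩
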